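/- For every non-periodic double ray R there exists a vertex v̂ such that: (1) R v̂ is not isomorphic to any subdigraph of v̂ R; (2) for every vertex w, if R v̂ ≅ R w then v̂ R ≅ w R; and (3) for every vertex w, if R v̂ ≅ w R then v̂ R ≅ R w. -/
import Mathlib


/-- A copy of the digraph `H` in the digraph `D`: an injective arc-preserving map. -/
structure DCopy {V W : Type} (H : Digraph V) (D : Digraph W) where
  toFun : V → W
  inj : Function.Injective toFun
  adj : ∀ u v : V, H.Adj u v → D.Adj (toFun u) (toFun v)

/-- Two copies are vertex-disjoint if their images are disjoint. -/
def DCopy.VDisjoint {V W : Type} {H : Digraph V} {D : Digraph W}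
    (c₁ c₂ : DCopy H D) : Prop :=
  ∀ u v : V, c₁.toFun u ≠ c₂.toFun v

/-- `D` contains arbitrarily many pairwise vertex-disjoint copies of `H`. -/
def ManyDisjointCopies {V W : Type} (H : Digraph V) (D : Digraph W) : Prop :=
  ∀ k : ℕ, ∃ f : Fin k → DCopy H D, ∀ i j : Fin k, i ≠ j → (f i).VDisjoint (f j)

/-- `D` contains infinitely many pairwise vertex-disjoint copies of `H`. -/
def InfDisjointCopies {V W : Type} (H : Digraph V) (D : Digraph W) : Prop :=
  ∃ f : ℕ → DCopy H D, ∀ i j : ℕ, i ≠ j → (f i).VDisjoint (f j)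

/-- A digraph `H` is ubiquitous if every digraph containing arbitrarily many
pairwise disjoint copies of `H` contains infinitely many. -/
def Ubiquitous {V : Type} (H : Digraph V) : Prop :=
  ∀ (W : Type) (D : Digraph W), ManyDisjointCopies H D → InfDisjointCopies H D

/-- The oriented double ray on `ℤ` determined by the orientation function `o`:
`o n = true` means the arc between `n` and `n+1` points from `n` to `n+1`. -/
def doubleRay (o : ℤ → Bool) : Digraph ℤ where
  Adj u v := (v = u + 1 ∧ o u = true) ∨ (u = v + 1 ∧ o v = false)

/-- A turn of the double ray: a vertex of in-degree 2 or out-degree 2. -/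
def IsTurn (o : ℤ → Bool) (n : ℤ) : Prop := o (n - 1) ≠ o n

/-- The oriented ray on `ℕ` determined by the orientation function `r`:
`r i = true` means the arc between `i` and `i+1` points from `i` to `i+1`
(away from the root `0`). -/
def rayD (r : ℕ → Bool) : Digraph ℕ where
  Adj u v := (v = u + 1 ∧ r u = true) ∨ (u = v + 1 ∧ r v = false)

/-- The backward tail `Rv` of the double ray, as a ray rooted at `v`:
index `i` corresponds to the vertex `v - i`. -/
def backTail (o : ℤ → Bool) (v : ℤ) : ℕ → Bool := fun i => !o (v - i - 1)

/-- The forward tail `vR` of the double ray, as a ray rooted at `v`: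
index `i` corresponds to the vertex `v + i`. -/
def fwdTail (o : ℤ → Bool) (v : ℤ) : ℕ → Bool := fun i => o (v + i)

/-- A digraph homomorphism (endomorphism) of the ray `rayD r`. -/
def IsRayHom (r : ℕ → Bool) (f : ℕ → ℕ) : Prop :=
  ∀ u v : ℕ, (rayD r).Adj u v → (rayD r).Adj (f u) (f v)

/-- A ray is periodic if it has a non-trivial order-preserving endomorphism. -/
def RayPeriodic (r : ℕ → Bool) : Prop :=
  ∃ f : ℕ → ℕ, IsRayHom r f ∧ Monotone f ∧ f ≠ id

/-- `p` is the periodicity of the ray `rayD r`: the least distance `d(v, f v)`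
over all vertices `v` and non-trivial order-preserving endomorphisms `f`. -/
def RayPeriodicity (r : ℕ → Bool) (p : ℕ) : Prop :=
  IsLeast {d : ℕ | ∃ f : ℕ → ℕ, IsRayHom r f ∧ Monotone f ∧ f ≠ id ∧
    ∃ v : ℕ, Nat.dist (f v) v = d} p

/-- A digraph homomorphism (endomorphism) of the double ray `doubleRay o`. -/
def IsDRayHom (o : ℤ → Bool) (f : ℤ → ℤ) : Prop :=
  ∀ u v : ℤ, (doubleRay o).Adj u v → (doubleRay o).Adj (f u) (f v)

/-- A double ray is periodic if it has a non-trivial order-preserving endomorphism. -/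
def DRayPeriodic (o : ℤ → Bool) : Prop :=
  ∃ f : ℤ → ℤ, IsDRayHom o f ∧ Monotone f ∧ f ≠ id

/-- `p` is the periodicity of the double ray `doubleRay o`. -/
def DRayPeriodicity (o : ℤ → Bool) (p : ℕ) : Prop :=
  IsLeast {d : ℕ | ∃ f : ℤ → ℤ, IsDRayHom o f ∧ Monotone f ∧ f ≠ id ∧
    ∃ v : ℤ, (f v - v).natAbs = d} p

/-- The rays `rayD r` and `rayD r'` are isomorphic as digraphs. -/
def RayIso (r r' : ℕ → Bool) : Prop :=
  ∃ φ : ℕ ≃ ℕ, ∀ u v : ℕ, (rayD r).Adj u v ↔ (rayD r').Adj (φ u) (φ v)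

/-- The ray `rayD r` is isomorphic to a subdigraph of the ray `rayD r'`. -/
def RayLE (r r' : ℕ → Bool) : Prop :=
  ∃ f : ℕ → ℕ, Function.Injective f ∧
    ∀ u v : ℕ, (rayD r).Adj u v → (rayD r').Adj (f u) (f v)

/-- An in-ray: every arc points towards the root. -/
def IsInRay (r : ℕ → Bool) : Prop := ∀ i : ℕ, r i = false

/-- An out-ray: every arc points away from the root. -/
def IsOutRay (r : ℕ → Bool) : Prop := ∀ i : ℕ, r i = true


section Core
variable {o : ℤ → Bool}

private lemma shuttle {g n mg M : ℤ} (hg : 0 < g) (hgn : g ≤ n)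
    (hper_g : ∀ y ≤ mg, o y = o (y + g))
    (hper_n : ∀ y ≤ M, o y = o (y + n)) :
    ∀ x, x + g ≤ M + n → o x = o (x + g) := by
  have hn : 0 < n := lt_of_lt_of_le hg hgn
  have down : ∀ (k : ℕ) (z : ℤ), z ≤ M + n → o z = o (z - k * n) := by
    intro k
    induction k with
    | zero => intro z hz; simp
    | succ k ih =>
      intro z hz
      have h1 : o (z - n) = o z := by
        have := hper_n (z - n) (by omega)
        have e : z - n + n = z := by ring
        rw [e] at this
        exact this
      have h2 : o (z - n) = o (z - n - k * n) := ih (z - n) (by omega)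
      have e2 : z - (k + 1 : ℕ) * n = z - n - k * n := by push_cast; ring
      rw [e2, ← h1, h2]
  intro x hx
  set k : ℕ := (x - mg).toNat with hk
  have hk1 : x - mg ≤ (k : ℤ) := Int.self_le_toNat _
  have hkx : x - k * n ≤ mg := by
    have h1 : (k : ℤ) ≤ k * n := le_mul_of_one_le_right (Int.ofNat_nonneg k) (by omega)
    omega
  have d1 : o x = o (x - k * n) := down k x (by omega)
  have d2 : o (x + g) = o (x + g - k * n) := down k (x + g) (by omega)
  have d3 : o (x - k * n) = o (x - k * n + g) := hper_g _ hkx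
  have e : x - k * n + g = x + g - k * n := by ring
  rw [d1, d3, e, ← d2]

private lemma exists_leftAper (A : ∀ t : ℤ, t ≠ 0 → ∃ u : ℤ, o (u + t) ≠ o u) :
    ∃ v₀ : ℤ, ∀ t : ℤ, t ≠ 0 → ∃ x, x ≤ v₀ - 1 ∧ o x ≠ o (x + t) := by
  classical
  by_contra hcon
  push_neg at hcon
  have norm : ∀ v : ℤ, ∃ n : ℕ, 0 < n ∧ ∀ x ≤ v - 1 - (n : ℤ), o x = o (x + n) := by
    intro v
    obtain ⟨t, ht0, hper⟩ := hcon v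
    refine ⟨t.natAbs, by omega, ?_⟩
    intro x hx
    rcases lt_or_gt_of_ne ht0 with hneg | hpos
    · have hc : ((t.natAbs : ℤ)) = -t := by omega
      have := hper (x - t) (by omega)
      have e : x - t + t = x := by ring
      rw [e] at this
      rw [hc]
      have e2 : x + -t = x - t := by ring
      rw [e2]
      exact this.symm
    · have hc : ((t.natAbs : ℤ)) = t := by omega
      rw [hc]
      exact hper x (by omega)
  have hS : ∃ n : ℕ, 0 < n ∧ ∃ m : ℤ, ∀ x ≤ m, o x = o (x + n) := by
    obtain ⟨n, hn, hper⟩ := norm 0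
    exact ⟨n, hn, _, hper⟩
  set g := Nat.find hS with hgdef
  obtain ⟨hgpos, mg, hmg⟩ := Nat.find_spec hS
  have glob : ∀ x : ℤ, o x = o (x + g) := by
    intro x
    obtain ⟨n, hn, hper⟩ := norm (x + g + 1)
    have hgn : g ≤ n := Nat.find_min' hS ⟨hn, _, hper⟩
    exact shuttle (by exact_mod_cast hgpos) (by exact_mod_cast hgn) hmg hper x (by omega)
  obtain ⟨u, hu⟩ := A g (by exact_mod_cast hgpos.ne')
  exact hu (glob u).symm

private lemma break_pair {v₀ : ℤ}
    (LA : ∀ t : ℤ, t ≠ 0 → ∃ x, x ≤ v₀ - 1 ∧ o x ≠ o (x + t))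
    {s : ℤ} (hs : s ≠ 0) {v : ℤ} (hv : v₀ ≤ v) :
    ∃ x, x ≤ v - 1 ∧ x - s ≤ v - 1 ∧ o x ≠ o (x - s) := by
  rcases lt_or_gt_of_ne hs with hneg | hpos
  · obtain ⟨x, hx, hne⟩ := LA s hs
    refine ⟨x + s, by omega, by omega, ?_⟩
    have e : x + s - s = x := by ring
    rw [e]
    exact fun hh => hne hh.symm
  · obtain ⟨x, hx, hne⟩ := LA (-s) (by omega)
    refine ⟨x, by omega, by omega, ?_⟩
    have e : x - s = x + -s := by ring
    rw [e]
    exact hne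

private lemma caseI_nc {v₀ c₀ : ℤ}
    (LA : ∀ t : ℤ, t ≠ 0 → ∃ x, x ≤ v₀ - 1 ∧ o x ≠ o (x + t))
    (hc₀ : ∀ x : ℤ, o x = !o (c₀ - x)) {v : ℤ} (hv : v₀ ≤ v)
    {c : ℤ} (hc : c ≠ c₀) :
    ∃ x, x ≤ v - 1 ∧ o x ≠ !o (c - x) := by
  by_contra hP
  push_neg at hP
  obtain ⟨x, hx1, hx2, hne⟩ := break_pair LA (s := c - c₀) (sub_ne_zero.mpr hc) hv
  apply hne
  have h1 : o x = !o (c - x) := hP x hx1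
  have h2 : o (x - (c - c₀)) = !o (c₀ - (x - (c - c₀))) := hc₀ _
  have h3 : c₀ - (x - (c - c₀)) = c - x := by ring
  rw [h3] at h2
  rw [h1, h2]

private lemma caseII {v₀ : ℤ}
    (LA : ∀ t : ℤ, t ≠ 0 → ∃ x, x ≤ v₀ - 1 ∧ o x ≠ o (x + t))
    (hno : ∀ c : ℤ, ∃ x : ℤ, o x ≠ !o (c - x)) :
    ∃ v, v₀ ≤ v ∧ ∀ c : ℤ, ∃ x, x ≤ v - 1 ∧ o x ≠ !o (c - x) := by
  by_contra hcon
  push_neg at hcon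
  obtain ⟨c₁, hP1⟩ := hcon v₀ le_rfl
  obtain ⟨x₁, hx₁⟩ := hno c₁
  obtain ⟨c₂, hP2⟩ := hcon (max v₀ (x₁ + 1)) (le_max_left _ _)
  have hmax := le_max_right v₀ (x₁ + 1)
  have hmax' := le_max_left v₀ (x₁ + 1)
  have hne : c₂ ≠ c₁ := by
    rintro rfl
    exact hx₁ (hP2 x₁ (by omega))
  obtain ⟨x, hx1, hx2, hbrk⟩ := break_pair LA (s := c₂ - c₁) (sub_ne_zero.mpr hne) le_rfl
  apply hbrk
  have h1 : o x = !o (c₂ - x) := hP2 x (by omega)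
  have h2 : o (x - (c₂ - c₁)) = !o (c₁ - (x - (c₂ - c₁))) := hP1 _ (by omega)
  have h3 : c₁ - (x - (c₂ - c₁)) = c₂ - x := by ring
  rw [h3] at h2
  rw [h1, h2]

private lemma core (o : ℤ → Bool) (A : ∀ t : ℤ, t ≠ 0 → ∃ u : ℤ, o (u + t) ≠ o u) :
    ∃ v : ℤ,
      (∀ c : ℤ, 2 * v - 1 ≤ c → ∃ x, x ≤ v - 1 ∧ o x ≠ !o (c - x)) ∧
      (∀ t : ℤ, (∀ x, x ≤ v - 1 → o x = o (x + t)) → ∀ x, v ≤ x → o x = o (x + t)) ∧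
      (∀ c : ℤ, (∀ x, x ≤ v - 1 → o x = !o (c - x)) → ∀ x, v ≤ x → o x = !o (c - x)) := by
  classical
  obtain ⟨v₀, LA⟩ := exists_leftAper A
  have part2 : ∀ v : ℤ, v₀ ≤ v → ∀ t : ℤ,
      (∀ x, x ≤ v - 1 → o x = o (x + t)) → ∀ x, v ≤ x → o x = o (x + t) := by
    intro v hv t hyp x hx
    by_cases ht : t = 0
    · subst ht; simp
    · obtain ⟨y, hy, hney⟩ := LA t ht
      exact absurd (hyp y (by omega)) hney
  by_cases hex : ∃ c₀ : ℤ, ∀ x : ℤ, o x = !o (c₀ - x)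
  · obtain ⟨c₀, hc₀⟩ := hex
    have habs : c₀ ≤ |c₀| := le_abs_self c₀
    have habs2 : (0:ℤ) ≤ |c₀| := abs_nonneg c₀
    have hm1 : v₀ ≤ max v₀ (|c₀| + 1) := le_max_left _ _
    have hm2 : |c₀| + 1 ≤ max v₀ (|c₀| + 1) := le_max_right _ _
    refine ⟨max v₀ (|c₀| + 1), ?_, part2 _ hm1, ?_⟩
    · intro c hc
      exact caseI_nc LA hc₀ hm1 (by omega)
    · intro c hyp x hx
      by_cases hcc : c = c₀
      · subst hcc; exact hc₀ x
      · obtain ⟨y, hy, hney⟩ := caseI_nc LA hc₀ hm1 hcc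
        exact absurd (hyp y hy) hney
  · push_neg at hex
    obtain ⟨v, hv, hall⟩ := caseII LA hex
    refine ⟨v, fun c _ => hall c, part2 v hv, ?_⟩
    intro c hyp x hx
    obtain ⟨y, hy, hney⟩ := hall c
    exact absurd (hyp y hy) hney

end Core

section Graph

private lemma rayLE_shift {r r' : ℕ → Bool} (h : RayLE r r') :
    ∃ a : ℕ, ∀ i : ℕ, r' (a + i) = r i := by
  obtain ⟨f, hinj, hhom⟩ := h
  have step : ∀ i : ℕ, f (i + 1) = f i + 1 ∨ f i = f (i + 1) + 1 := by
    intro i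
    cases hri : r i with
    | true =>
      have hadj : (rayD r).Adj i (i + 1) := Or.inl ⟨rfl, hri⟩
      rcases hhom _ _ hadj with ⟨h1, _⟩ | ⟨h1, _⟩
      · exact Or.inl h1
      · exact Or.inr h1
    | false =>
      have hadj : (rayD r).Adj (i + 1) i := Or.inr ⟨rfl, hri⟩
      rcases hhom _ _ hadj with ⟨h1, _⟩ | ⟨h1, _⟩
      · exact Or.inr h1
      · exact Or.inl h1
  have asc : ∀ i : ℕ, f (i + 1) = f i + 1 := by
    by_contra hcon
    push_neg at hcon
    obtain ⟨i, hi⟩ := hcon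
    have hdesc0 : f i = f (i + 1) + 1 := by
      rcases step i with h | h
      · exact absurd h hi
      · exact h
    have hdesc : ∀ k : ℕ, f (i + k) = f (i + k + 1) + 1 := by
      intro k
      induction k with
      | zero => simpa using hdesc0
      | succ k ih =>
        show f (i + k + 1) = f (i + k + 1 + 1) + 1
        rcases step (i + k + 1) with h | h
        · exfalso
          have heqv : f (i + k + 1 + 1) = f (i + k) := by omega
          have := hinj heqv
          omega
        · exact h
    have decr : ∀ k : ℕ, f i = f (i + k) + k := by
      intro k
      induction k with
      | zero => simp
      | succ k ih =>
        show f i = f (i + k + 1) + (k + 1)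
        have := hdesc k
        omega
    have := decr (f i + 1)
    omega
  have hshift : ∀ i : ℕ, f i = f 0 + i := by
    intro i
    induction i with
    | zero => simp
    | succ i ih =>
      have := asc i
      omega
  refine ⟨f 0, fun i => ?_⟩
  cases hri : r i with
  | true =>
    have hadj : (rayD r).Adj i (i + 1) := Or.inl ⟨rfl, hri⟩
    rcases hhom _ _ hadj with ⟨_, h2⟩ | ⟨h1, _⟩
    · rw [← hshift i]; exact h2
    · exfalso
      have e1 := hshift i
      have e2 := hshift (i + 1)
      omega
  | false =>
    have hadj : (rayD r).Adj (i + 1) i := Or.inr ⟨rfl, hri⟩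
    rcases hhom _ _ hadj with ⟨h1, _⟩ | ⟨_, h2⟩
    · exfalso
      have e1 := hshift i
      have e2 := hshift (i + 1)
      omega
    · rw [← hshift i]; exact h2

private lemma und_intro (s : ℕ → Bool) (u v : ℕ) (h : v = u + 1 ∨ u = v + 1) :
    (rayD s).Adj u v ∨ (rayD s).Adj v u := by
  rcases h with h1 | h1
  · cases hs : s u with
    | true => exact Or.inl (Or.inl ⟨h1, hs⟩)
    | false => exact Or.inr (Or.inr ⟨h1, hs⟩)
  · cases hs : s v with
    | true => exact Or.inr (Or.inl ⟨h1, hs⟩)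
    | false => exact Or.inl (Or.inr ⟨h1, hs⟩)

private lemma und_elim {s : ℕ → Bool} {u v : ℕ} (h : (rayD s).Adj u v) :
    v = u + 1 ∨ u = v + 1 := by
  rcases h with ⟨h1, _⟩ | ⟨h1, _⟩
  · exact Or.inl h1
  · exact Or.inr h1

private lemma rayIso_eq {r r' : ℕ → Bool} (h : RayIso r r') : r = r' := by
  obtain ⟨φ, hφ⟩ := h
  have undφ : ∀ u v : ℕ, (v = u + 1 ∨ u = v + 1) → (φ v = φ u + 1 ∨ φ u = φ v + 1) := by
    intro u v h1
    rcases und_intro r u v h1 with h2 | h2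
    · exact und_elim ((hφ u v).mp h2)
    · exact Or.symm (und_elim ((hφ v u).mp h2))
  have undψ : ∀ u v : ℕ, (φ v = φ u + 1 ∨ φ u = φ v + 1) → (v = u + 1 ∨ u = v + 1) := by
    intro u v h1
    rcases und_intro r' (φ u) (φ v) h1 with h2 | h2
    · exact und_elim ((hφ u v).mpr h2)
    · exact Or.symm (und_elim ((hφ v u).mpr h2))
  have hφ0 : φ 0 = 0 := by
    by_contra h0
    obtain ⟨k, hk⟩ : ∃ k, φ 0 = k + 1 := ⟨φ 0 - 1, by omega⟩
    have ha : φ.symm k = 1 := by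
      have h1 : φ (φ.symm k) = k := φ.apply_symm_apply k
      have h2 := undψ (φ.symm k) 0 (Or.inl (by omega))
      omega
    have hb : φ.symm (k + 2) = 1 := by
      have h1 : φ (φ.symm (k + 2)) = k + 2 := φ.apply_symm_apply _
      have h2 := undψ (φ.symm (k + 2)) 0 (Or.inr (by omega))
      omega
    have : φ.symm k = φ.symm (k + 2) := by rw [ha, hb]
    have := φ.symm.injective this
    omega
  have hφn : ∀ n : ℕ, φ n = n := by
    intro n
    induction n using Nat.strong_induction_on with
    | _ n ih =>
      match n with
      | 0 => exact hφ0
      | Nat.succ m =>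
        have ihm : φ m = m := ih m (by omega)
        rcases undφ m (m + 1) (Or.inl rfl) with h1 | h1
        · show φ (m + 1) = m + 1
          rw [h1, ihm]
        · exfalso
          rw [ihm] at h1
          have hmlt : φ (m + 1) < m + 1 := by omega
          have := ih (φ (m + 1)) hmlt
          have heq : φ (φ (m + 1)) = φ (m + 1) := this
          have := φ.injective heq
          omega
  funext i
  have hA1 : (rayD r).Adj i (i + 1) ↔ (rayD r').Adj i (i + 1) := by
    have := hφ i (i + 1)
    rwa [hφn i, hφn (i + 1)] at this
  have hA2 : (rayD r).Adj (i + 1) i ↔ (rayD r').Adj (i + 1) i := by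
    have := hφ (i + 1) i
    rwa [hφn i, hφn (i + 1)] at this
  cases hri : r i with
  | true =>
    rcases hA1.mp (Or.inl ⟨rfl, hri⟩) with ⟨_, h2⟩ | ⟨h2, _⟩
    · exact h2.symm
    · omega
  | false =>
    rcases hA2.mp (Or.inr ⟨rfl, hri⟩) with ⟨h2, _⟩ | ⟨_, h2⟩
    · omega
    · exact h2.symm

end Graph


private lemma aper_of_not_periodic {o : ℤ → Bool} (h : ¬ DRayPeriodic o) :
    ∀ t : ℤ, t ≠ 0 → ∃ u : ℤ, o (u + t) ≠ o u := by
  intro t ht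
  by_contra hcon
  push_neg at hcon
  apply h
  refine ⟨fun x => x + t, ?_, ?_, ?_⟩
  · intro u v hadj
    rcases hadj with ⟨h1, h2⟩ | ⟨h1, h2⟩
    · refine Or.inl ⟨?_, ?_⟩
      · show v + t = u + t + 1
        omega
      · show o (u + t) = true
        rw [hcon u]; exact h2
    · refine Or.inr ⟨?_, ?_⟩
      · show u + t = v + t + 1
        omega
      · show o (v + t) = false
        rw [hcon v]; exact h2
  · intro a b hab
    simpa using add_le_add_right hab t
  · intro hid
    have h0 := congrFun hid 0
    simp at h0
    exact ht h0


/-- for every non-periodic double ray `R` there is a vertex `v̂`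
such that (1) `Rv̂` is not isomorphic to a subdigraph of `v̂R`, (2) `Rv̂ ≅ Rw`
implies `v̂R ≅ wR`, and (3) `Rv̂ ≅ wR` implies `v̂R ≅ Rw`. -/
theorem exists_good_vertex (o : ℤ → Bool) (h : ¬ DRayPeriodic o) :
    ∃ vhat : ℤ,
      (¬ RayLE (backTail o vhat) (fwdTail o vhat)) ∧
      (∀ w : ℤ, RayIso (backTail o vhat) (backTail o w) →
        RayIso (fwdTail o vhat) (fwdTail o w)) ∧
      (∀ w : ℤ, RayIso (backTail o vhat) (fwdTail o w) →
        RayIso (fwdTail o vhat) (backTail o w)) := by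
  obtain ⟨v, h1, h2, h3⟩ := core o (aper_of_not_periodic h)
  refine ⟨v, ?_, ?_, ?_⟩
  · -- (1)
    intro hLE
    obtain ⟨a, ha⟩ := rayLE_shift hLE
    obtain ⟨x, hx, hne⟩ := h1 (2 * v - 1 + a) (by omega)
    apply hne
    have hi := ha (v - 1 - x).toNat
    simp only [fwdTail, backTail] at hi
    have hcast : (((v - 1 - x).toNat : ℤ)) = v - 1 - x := Int.toNat_of_nonneg (by omega)
    push_cast at hi
    rw [hcast] at hi
    have e1 : v + ((a : ℤ) + (v - 1 - x)) = 2 * v - 1 + a - x := by ring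
    have e2 : v - (v - 1 - x) - 1 = x := by ring
    rw [e1, e2] at hi
    rw [hi]
    simp
  · -- (2)
    intro w hiso
    have heq := rayIso_eq hiso
    have hBT : ∀ x : ℤ, x ≤ v - 1 → o x = o (x + (w - v)) := by
      intro x hx
      have hi := congrFun heq (v - 1 - x).toNat
      simp only [backTail] at hi
      have hcast : (((v - 1 - x).toNat : ℤ)) = v - 1 - x := Int.toNat_of_nonneg (by omega)
      rw [hcast] at hi
      have e2 : v - (v - 1 - x) - 1 = x := by ring
      have e3 : w - (v - 1 - x) - 1 = x + (w - v) := by ring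
      rw [e2, e3] at hi
      exact Bool.not_inj hi
    have hfwd := h2 (w - v) hBT
    have hEq : fwdTail o v = fwdTail o w := by
      funext i
      simp only [fwdTail]
      have hx := hfwd (v + i) (by omega)
      have e : v + (i : ℤ) + (w - v) = w + i := by ring
      rw [e] at hx
      exact hx
    rw [hEq]
    exact ⟨Equiv.refl ℕ, fun u v => Iff.rfl⟩
  · -- (3)
    intro w hiso
    have heq := rayIso_eq hiso
    have hBT : ∀ x : ℤ, x ≤ v - 1 → o x = !o ((v - 1 + w) - x) := by
      intro x hx
      have hi := congrFun heq (v - 1 - x).toNat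
      simp only [backTail, fwdTail] at hi
      have hcast : (((v - 1 - x).toNat : ℤ)) = v - 1 - x := Int.toNat_of_nonneg (by omega)
      rw [hcast] at hi
      have e2 : v - (v - 1 - x) - 1 = x := by ring
      have e3 : w + (v - 1 - x) = (v - 1 + w) - x := by ring
      rw [e2, e3] at hi
      rw [← hi]
      simp
    have hfwd := h3 (v - 1 + w) hBT
    have hEq : fwdTail o v = backTail o w := by
      funext i
      simp only [fwdTail, backTail]
      have hx := hfwd (v + i) (by omega)
      have e : (v - 1 + w) - (v + i) = w - i - 1 := by ring
      rw [e] at hx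
      exact hx
    rw [hEq]
    exact ⟨Equiv.refl ℕ, fun u v => Iff.rfl⟩
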